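/- arXiv:1612.04766 — 2 statements merged into one kernel-verified Lean document; each statement's English description precedes it below -/
import Mathlib

section
/- Tuenter-type identity for compound sequences: for any suitable pair (A,B), any index 0≤j≤k, and any function f defined on the nonnegative integers, Σ_{n∈NR(A,B)} [f(n+g_j) − f(n)] = Σ_{n∈U_{j,0}} f(n) − Σ_{n=0}^{g_j−1} f(n), where U_{j,0} = { Σ_{i≠j} n_i g_i : 0≤n_i<b_{i+1} for i<j, 0≤n_i<a_i for i>j }. -/
open Finset

/-- The compound sequence: `g k A B i = b₁⋯bᵢ · aᵢ₊₁⋯a_k` (0-indexed: `A j = a_{j+1}`,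
`B j = b_{j+1}`). -/
def compoundSeq (k : ℕ) (A B : ℕ → ℕ) (i : ℕ) : ℕ :=
  (∏ j ∈ Finset.range i, B j) * (∏ j ∈ Finset.Ico i k, A j)

/-- The bound on the `i`-th coefficient in the normal form relative to `j`, with the `j`-th
coefficient forced to be `0`. -/
def nfBound (k j : ℕ) (A B : ℕ → ℕ) (i : Fin (k + 1)) : ℕ :=
  if (i : ℕ) < j then B (i : ℕ) else if (i : ℕ) = j then 1 else A ((i : ℕ) - 1)

/-!
Let `m = g_j`. Since `bᵢ₊₁ gᵢ = aᵢ₊₁ gᵢ₊₁`, any representation `Σ cᵢ gᵢ` can be normalised by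
carrying (upwards below `j`, downwards above `j`) into an element of `U_{j,0}` plus a multiple of
`m`. As `gcd(g₀, …, g_k) = 1`, every residue mod `m` is hit, and since the box defining `U_{j,0}`
has exactly `m` points, `U_{j,0}` is a complete residue system mod `m`. Hence `U_{j,0}` is the
Apéry set of the semigroup with respect to `m`: `n` is representable iff `n ≥ u`, where `u` is the
element of `U_{j,0}` congruent to `n`. The non-representable numbers in the class of `u` are
`r, r + m, …, u - m` with `r < m`, so their contribution to the left side telescopes to `f u - f r`.
-/

@[to_additive]
theorem prod_range_succ_eq_mul_prod_Ioc {M : Type*} [CommMonoid M] (f : ℕ → M) {j k : ℕ}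
    (hjk : j ≤ k) :
    ∏ i ∈ range (k + 1), f i = (∏ i ∈ range j, f i) * f j * ∏ i ∈ Ioc j k, f i := by
  rw [← prod_range_mul_prod_Ico f (by omega : j ≤ k + 1),
    prod_eq_prod_Ico_succ_bot (by omega : j < k + 1), Ico_add_one_add_one_eq_Ioc, mul_assoc]

theorem mul_eq_mod_mul_add_div_mul {p q g g' : ℕ} (hrel : p * g = q * g') (e : ℕ) :
    e * g = e % p * g + e / p * q * g' := by
  rw [mul_assoc, ← hrel, ← mul_assoc, ← add_mul, mul_comm _ p, Nat.mod_add_div]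

theorem exists_carry_up (g p q : ℕ → ℕ) {n : ℕ} (hp : ∀ i < n, 0 < p i)
    (hrel : ∀ i < n, p i * g i = q i * g (i + 1)) (c : ℕ → ℕ) :
    ∃ d : ℕ → ℕ, (∀ i < n, d i < p i) ∧
      ∃ s, ∑ i ∈ range n, c i * g i = ∑ i ∈ range n, d i * g i + s * g n := by
  induction n with
  | zero => exact ⟨c, by simp, 0, by simp⟩
  | succ n ih =>
    obtain ⟨d, hd, s, hs⟩ := ih (fun i hi => hp i (by omega)) (fun i hi => hrel i (by omega))
    set e := s + c n with he
    refine ⟨Function.update d n (e % p n), fun i hi => ?_, e / p n * q n, ?_⟩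
    · rcases eq_or_ne i n with rfl | hin
      · simpa using Nat.mod_lt e (hp i hi)
      · simpa [hin] using hd i (by omega)
    · have hcarry := mul_eq_mod_mul_add_div_mul (hrel n (by omega)) e
      have hd' : ∑ i ∈ range n, Function.update d n (e % p n) i * g i
          = ∑ i ∈ range n, d i * g i :=
        sum_congr rfl fun i hi => by rw [Function.update_of_ne (by simp at hi; omega)]
      rw [sum_range_succ, sum_range_succ, hs, hd', Function.update_self]
      rw [he] at hcarry ⊢
      linarith

theorem exists_carry_down (g p q : ℕ → ℕ) {m n : ℕ} (hmn : m ≤ n)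
    (hp : ∀ i ∈ Ioc m n, 0 < p i) (hrel : ∀ i ∈ Ioc m n, p i * g i = q i * g (i - 1))
    (c : ℕ → ℕ) :
    ∃ d : ℕ → ℕ, (∀ i ∈ Ioc m n, d i < p i) ∧
      ∃ s, ∑ i ∈ Ioc m n, c i * g i = ∑ i ∈ Ioc m n, d i * g i + s * g m := by
  obtain ⟨l, rfl⟩ := Nat.exists_eq_add_of_le hmn
  clear hmn
  induction l generalizing m with
  | zero => exact ⟨c, by simp, 0, by simp⟩
  | succ l ih =>
    have hIoc : Ioc m (m + (l + 1)) = insert (m + 1) (Ioc (m + 1) (m + 1 + l)) := by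
      ext i; simp only [mem_Ioc, mem_insert]; omega
    have hsub : Ioc (m + 1) (m + 1 + l) ⊆ Ioc m (m + (l + 1)) := hIoc ▸ subset_insert _ _
    have hnot : m + 1 ∉ Ioc (m + 1) (m + 1 + l) := by simp
    have htop : m + 1 ∈ Ioc m (m + (l + 1)) := by simp
    obtain ⟨d, hd, s, hs⟩ := ih (fun i hi => hp i (hsub hi)) (fun i hi => hrel i (hsub hi))
    set e := s + c (m + 1) with he
    refine ⟨Function.update d (m + 1) (e % p (m + 1)), fun i hi => ?_,
      e / p (m + 1) * q (m + 1), ?_⟩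
    · rcases eq_or_ne i (m + 1) with rfl | hin
      · simpa using Nat.mod_lt e (hp _ hi)
      · rw [hIoc, mem_insert] at hi
        simpa [hin] using hd i (hi.resolve_left hin)
    · have hcarry := mul_eq_mod_mul_add_div_mul (hrel (m + 1) htop) e
      rw [Nat.add_sub_cancel] at hcarry
      have hd' : ∑ i ∈ Ioc (m + 1) (m + 1 + l), Function.update d (m + 1) (e % p (m + 1)) i * g i
          = ∑ i ∈ Ioc (m + 1) (m + 1 + l), d i * g i :=
        sum_congr rfl fun i hi => by rw [Function.update_of_ne (by rintro rfl; exact hnot hi)]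
      rw [hIoc, sum_insert hnot, sum_insert hnot, hs, hd', Function.update_self]
      rw [he] at hcarry ⊢
      linarith

theorem sum_shift_sub_eq_of_apery {M : Type*} [AddCommGroup M] {m : ℕ} [NeZero m]
    (u : ZMod m → ℕ) (hu : ∀ z, (u z : ZMod m) = z) (NR : Finset ℕ)
    (hNR : ∀ n, n ∈ NR ↔ n < u n) (f : ℕ → M) :
    ∑ n ∈ NR, (f (n + m) - f n) = ∑ z, f (u z) - ∑ n ∈ range m, f n := by
  have hm : 0 < m := Nat.pos_of_neZero m
  have hfiber (z : ZMod m) :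
      ∑ n ∈ NR with ((n : ℕ) : ZMod m) = z, (f (n + m) - f n) = f (u z) - f z.val := by
    have hdecomp : z.val + m * (u z / m) = u z := by
      have hval := ZMod.val_natCast m (u z)
      rw [hu] at hval
      rw [hval, Nat.mod_add_div]
    have hfib : {n ∈ NR | ((n : ℕ) : ZMod m) = z} = (range (u z / m)).image (z.val + m * ·) := by
      ext n
      simp only [mem_filter, hNR, mem_image, mem_range]
      constructor
      · rintro ⟨hlt, rfl⟩
        rw [ZMod.val_natCast] at hdecomp ⊢
        refine ⟨n / m, Nat.lt_of_mul_lt_mul_left (a := m) ?_, Nat.mod_add_div n m⟩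
        linarith [Nat.mod_add_div n m]
      · rintro ⟨t, ht, rfl⟩
        have hcast : ((z.val + m * t : ℕ) : ZMod m) = z := by simp
        refine ⟨?_, hcast⟩
        rw [hcast, ← hdecomp]
        exact Nat.add_lt_add_left (Nat.mul_lt_mul_of_pos_left ht hm) _
    rw [hfib, sum_image fun _ _ _ _ h => Nat.eq_of_mul_eq_mul_left hm (Nat.add_left_cancel h)]
    have hstep (t : ℕ) : z.val + m * t + m = z.val + m * (t + 1) := by ring
    simp only [hstep]
    rw [sum_range_sub (fun t => f (z.val + m * t)), hdecomp, mul_zero, add_zero]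
  have hval : ∑ z : ZMod m, f z.val = ∑ n ∈ range m, f n := by
    obtain ⟨m, rfl⟩ := Nat.exists_eq_succ_of_ne_zero hm.ne'
    exact Fin.sum_univ_eq_sum_range f (m + 1)
  rw [← sum_fiberwise NR (fun n => (n : ZMod m)), sum_congr rfl fun z _ => hfiber z,
    sum_sub_distrib, hval]

section CompoundSeq

variable {k : ℕ} {A B : ℕ → ℕ}

theorem compoundSeq_succ_mul {i : ℕ} (hi : i < k) :
    A i * compoundSeq k A B (i + 1) = B i * compoundSeq k A B i := by
  rw [compoundSeq, compoundSeq, prod_range_succ, prod_eq_prod_Ico_succ_bot hi]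
  ring

theorem compoundSeq_pos (hA : ∀ i, i < k → 0 < A i) (hB : ∀ i, i < k → 0 < B i) {i : ℕ}
    (hi : i ≤ k) : 0 < compoundSeq k A B i :=
  Nat.mul_pos (prod_pos fun t ht => hB t (by simp at ht; omega))
    (prod_pos fun t ht => hA t (mem_Ico.mp ht).2)

theorem eq_one_of_forall_dvd_compoundSeq (hsuit : ∀ i j, j ≤ i → i < k → Nat.Coprime (A i) (B j))
    {d : ℕ} (hd : ∀ i ≤ k, d ∣ compoundSeq k A B i) : d = 1 := by
  by_contra hd1
  obtain ⟨p, hp, hpd⟩ := Nat.exists_prime_and_dvd hd1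
  -- a prime dividing every `gᵢ` divides `aᵢ₊₁⋯a_k` for every `i`, even the empty product (`i = k`)
  have hpA : ∀ i ≤ k, p ∣ ∏ t ∈ Ico i k, A t := by
    intro i hi
    induction i with
    | zero => simpa [compoundSeq] using hpd.trans (hd 0 hi)
    | succ i ih =>
      rw [prod_eq_prod_Ico_succ_bot (by omega)] at ih
      rcases hp.prime.dvd_mul.mp (ih (by omega)) with hpAi | hrest
      · rcases hp.prime.dvd_mul.mp (hpd.trans (hd (i + 1) hi)) with hpB | hrest
        · obtain ⟨t, ht, hpBt⟩ := hp.prime.exists_mem_finset_dvd hpB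
          have hcop := hsuit i t (by simp at ht; omega) (by omega)
          exact absurd (Nat.eq_one_of_dvd_coprimes hcop hpAi hpBt) hp.one_lt.ne'
        · exact hrest
      · exact hrest
  exact hp.one_lt.ne' (Nat.dvd_one.mp (by simpa using hpA k le_rfl))

theorem gcd_compoundSeq_eq_one (hsuit : ∀ i j, j ≤ i → i < k → Nat.Coprime (A i) (B j)) :
    (range (k + 1)).gcd (fun i => (compoundSeq k A B i : ℤ)) = 1 := by
  set d := (range (k + 1)).gcd (fun i => (compoundSeq k A B i : ℤ))
  have hd : d.natAbs = 1 := eq_one_of_forall_dvd_compoundSeq hsuit fun i hi => by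
    simpa using Int.natAbs_dvd_natAbs.mpr (gcd_dvd (f := fun i => (compoundSeq k A B i : ℤ))
      (mem_range.mpr (Nat.lt_succ_of_le hi)))
  have hnonneg : 0 ≤ d := Int.nonneg_of_normalize_eq_self Finset.normalize_gcd
  rw [← Int.natAbs_of_nonneg hnonneg, hd, Nat.cast_one]

end CompoundSeq

section NormalForm

variable {k : ℕ} {A B : ℕ → ℕ}

theorem prod_nfBound {j : ℕ} (hj : j ≤ k) :
    ∏ i : Fin (k + 1), nfBound k j A B i = compoundSeq k A B j := by
  unfold nfBound
  rw [Fin.prod_univ_eq_prod_range (fun i => if i < j then B i else if i = j then 1 else A (i - 1)),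
    prod_range_succ_eq_mul_prod_Ioc _ hj, ← Ico_add_one_add_one_eq_Ioc, ← prod_Ico_add' _ j k 1,
    compoundSeq]
  simp only [lt_irrefl, ↓reduceIte, mul_one]
  congr 1
  · exact prod_congr rfl fun i hi => if_pos (mem_range.mp hi)
  · exact prod_congr rfl fun i hi => by
      rw [if_neg (by simp at hi; omega), if_neg (by simp at hi; omega), Nat.add_sub_cancel]

def IsRepresentable (k : ℕ) (A B : ℕ → ℕ) (n : ℕ) : Prop :=
  ∃ c : Fin (k + 1) → ℕ, n = ∑ i : Fin (k + 1), c i * compoundSeq k A B i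

def nfValue (k j : ℕ) (A B : ℕ → ℕ) (e : ∀ i : Fin (k + 1), Fin (nfBound k j A B i)) : ℕ :=
  ∑ i : Fin (k + 1), (e i : ℕ) * compoundSeq k A B i

theorem isRepresentable_nfValue_add_mul {j : ℕ} (hj : j ≤ k)
    (e : ∀ i : Fin (k + 1), Fin (nfBound k j A B i)) (s : ℕ) :
    IsRepresentable k A B (nfValue k j A B e + s * compoundSeq k A B j) := by
  refine ⟨fun i => e i + if i = ⟨j, by omega⟩ then s else 0, ?_⟩
  simp [nfValue, add_mul, sum_add_distrib]

theorem exists_eq_nfValue_add_mul (hA : ∀ i, i < k → 0 < A i) (hB : ∀ i, i < k → 0 < B i)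
    {j : ℕ} (hj : j ≤ k) {n : ℕ} (hn : IsRepresentable k A B n) :
    ∃ e s, n = nfValue k j A B e + s * compoundSeq k A B j := by
  obtain ⟨c, rfl⟩ := hn
  set g := compoundSeq k A B
  let c' : ℕ → ℕ := fun t => if h : t < k + 1 then c ⟨t, h⟩ else 0
  have hc : ∑ i : Fin (k + 1), c i * g i = ∑ t ∈ range (k + 1), c' t * g t := by
    rw [← Fin.sum_univ_eq_sum_range (fun t => c' t * g t)]
    exact sum_congr rfl fun i _ => by simp only [c', dif_pos i.isLt, Fin.eta]
  obtain ⟨dlo, hdlo, slo, hslo⟩ := exists_carry_up g B A (n := j) (fun i hi => hB i (by omega))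
    (fun i hi => (compoundSeq_succ_mul (by omega)).symm) c'
  obtain ⟨dhi, hdhi, shi, hshi⟩ := exists_carry_down g (fun i => A (i - 1)) (fun i => B (i - 1)) hj
    (fun i hi => hA _ (by simp at hi; omega))
    (fun i hi => by
      obtain ⟨t, rfl⟩ : ∃ t, i = t + 1 := ⟨i - 1, by simp at hi; omega⟩
      exact compoundSeq_succ_mul (by simp at hi; omega)) c'
  let d : ℕ → ℕ := fun i => if i < j then dlo i else if i = j then 0 else dhi i
  have hd (i : Fin (k + 1)) : d i < nfBound k j A B i := by
    simp only [nfBound, d]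
    split_ifs with h1 h2
    · exact hdlo _ h1
    · exact Nat.one_pos
    · exact hdhi _ (mem_Ioc.mpr ⟨by omega, by omega⟩)
  have hval : nfValue k j A B (fun i => ⟨d i, hd i⟩)
      = ∑ i ∈ range j, dlo i * g i + ∑ i ∈ Ioc j k, dhi i * g i := by
    rw [nfValue, Fin.sum_univ_eq_sum_range (fun i => d i * g i), sum_range_succ_eq_add_sum_Ioc _ hj]
    simp only [d, lt_irrefl, ↓reduceIte, zero_mul, add_zero]
    congr 1
    · exact sum_congr rfl fun i hi => by rw [if_pos (mem_range.mp hi)]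
    · exact sum_congr rfl fun i hi => by
        rw [if_neg (by simp at hi; omega), if_neg (by simp at hi; omega)]
  refine ⟨fun i => ⟨d i, hd i⟩, slo + c' j + shi, ?_⟩
  rw [hc, sum_range_succ_eq_add_sum_Ioc _ hj, hslo, hshi, hval]
  ring

theorem nfValue_cast_surjective (hA : ∀ i, i < k → 0 < A i) (hB : ∀ i, i < k → 0 < B i)
    (hsuit : ∀ i j, j ≤ i → i < k → Nat.Coprime (A i) (B j)) {j : ℕ} (hj : j ≤ k) :
    Function.Surjective fun e => (nfValue k j A B e : ZMod (compoundSeq k A B j)) := by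
  set m := compoundSeq k A B j
  have : NeZero m := ⟨(compoundSeq_pos hA hB hj).ne'⟩
  intro z
  obtain ⟨x, hx⟩ := (range (k + 1)).gcd_eq_sum_mul (fun i => (compoundSeq k A B i : ℤ))
  rw [gcd_compoundSeq_eq_one hsuit] at hx
  obtain ⟨e, s, he⟩ := exists_eq_nfValue_add_mul hA hB hj ⟨fun i => (z * x i).val, rfl⟩
  refine ⟨e, show (nfValue k j A B e : ZMod _) = z from ?_⟩
  have hcast := congrArg (Nat.cast : ℕ → ZMod m) he
  push_cast at hcast
  rw [ZMod.natCast_self, mul_zero, add_zero] at hcast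
  rw [← hcast]
  have hx' := congrArg (Int.cast : ℤ → ZMod m) hx
  push_cast at hx'
  calc ∑ i : Fin (k + 1), ((z * (x i : ZMod m)).val : ZMod m) * (compoundSeq k A B i : ZMod m)
      = ∑ i ∈ range (k + 1), z * ((compoundSeq k A B i : ZMod m) * (x i : ZMod m)) := by
        rw [← Fin.sum_univ_eq_sum_range (fun i => z * ((compoundSeq k A B i : ZMod m) * x i))]
        refine sum_congr rfl fun i _ => ?_
        rw [ZMod.natCast_zmod_val]
        ring
    _ = z := by rw [← mul_sum, ← hx', mul_one]

theorem nfValue_cast_bijective (hA : ∀ i, i < k → 0 < A i) (hB : ∀ i, i < k → 0 < B i)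
    (hsuit : ∀ i j, j ≤ i → i < k → Nat.Coprime (A i) (B j)) {j : ℕ} (hj : j ≤ k)
    [NeZero (compoundSeq k A B j)] :
    Function.Bijective fun e => (nfValue k j A B e : ZMod (compoundSeq k A B j)) := by
  rw [Fintype.bijective_iff_surjective_and_card]
  refine ⟨nfValue_cast_surjective hA hB hsuit hj, ?_⟩
  simp [Fintype.card_pi, prod_nfBound hj]

theorem isRepresentable_iff_nfValue_le (hA : ∀ i, i < k → 0 < A i) (hB : ∀ i, i < k → 0 < B i)
    (hsuit : ∀ i j, j ≤ i → i < k → Nat.Coprime (A i) (B j)) {j : ℕ} (hj : j ≤ k)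
    [NeZero (compoundSeq k A B j)] {n : ℕ} {e : ∀ i : Fin (k + 1), Fin (nfBound k j A B i)}
    (he : (nfValue k j A B e : ZMod (compoundSeq k A B j)) = n) :
    IsRepresentable k A B n ↔ nfValue k j A B e ≤ n := by
  constructor
  · intro hn
    obtain ⟨e', s, rfl⟩ := exists_eq_nfValue_add_mul hA hB hj hn
    have he' : e' = e := (nfValue_cast_bijective hA hB hsuit hj).1 (by simp [he])
    rw [he']
    exact Nat.le_add_right _ _
  · intro hle
    obtain ⟨s, hs⟩ := (Nat.modEq_iff_dvd' hle).mp ((ZMod.natCast_eq_natCast_iff _ _ _).mp he)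
    rw [show n = nfValue k j A B e + s * compoundSeq k A B j by rw [mul_comm, ← hs]; omega]
    exact isRepresentable_nfValue_add_mul hj e s

end NormalForm

/-- Tuenter-type identity for compound sequences:
`Σ_{n ∈ NR(A,B)} [f(n+g_j) − f(n)] = Σ_{n ∈ U_{j,0}} f(n) − Σ_{n=0}^{g_j−1} f(n)`. -/
theorem tuenter_generalization (k : ℕ) (A B : ℕ → ℕ)
    (hA : ∀ i, i < k → 0 < A i) (hB : ∀ i, i < k → 0 < B i)
    (hsuit : ∀ i j, j ≤ i → i < k → Nat.Coprime (A i) (B j))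
    (j : ℕ) (hj : j ≤ k) (f : ℕ → ℝ)
    (NR : Finset ℕ)
    (hNR : ∀ n : ℕ, n ∈ NR ↔
      ¬ ∃ c : Fin (k + 1) → ℕ, n = ∑ i : Fin (k + 1), c i * compoundSeq k A B (i : ℕ)) :
    ∑ n ∈ NR, (f (n + compoundSeq k A B j) - f n) =
      (∑ n ∈ Finset.image
          (fun c : (∀ i : Fin (k + 1), Fin (nfBound k j A B i)) =>
            ∑ i : Fin (k + 1), (c i : ℕ) * compoundSeq k A B (i : ℕ))
          Finset.univ, f n) -
        ∑ n ∈ Finset.range (compoundSeq k A B j), f n := by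
  have : NeZero (compoundSeq k A B j) := ⟨(compoundSeq_pos hA hB hj).ne'⟩
  have hbij := nfValue_cast_bijective hA hB hsuit hj
  let E := Equiv.ofBijective _ hbij
  have hu (z : ZMod (compoundSeq k A B j)) : (nfValue k j A B (E.symm z) : ZMod _) = z :=
    E.apply_symm_apply z
  have hNR' (n : ℕ) : n ∈ NR ↔ n < nfValue k j A B (E.symm n) :=
    (hNR n).trans (not_congr (isRepresentable_iff_nfValue_le hA hB hsuit hj (hu n))) |>.trans not_le
  have himage : ∑ n ∈ univ.image (nfValue k j A B), f n = ∑ z, f (nfValue k j A B (E.symm z)) := by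
    rw [sum_image fun e _ e' _ h => hbij.1 (congrArg Nat.cast h)]
    exact (E.symm.sum_comp (fun e => f (nfValue k j A B e))).symm
  rw [show (fun c => ∑ i : Fin (k + 1), (c i : ℕ) * compoundSeq k A B i) = nfValue k j A B from rfl,
    himage]
  exact sum_shift_sub_eq_of_apery _ hu NR hNR' f
end

section
/- For a suitable pair (A,B) with compound sequence G(A,B), the first Sylvester sum satisfies S_1(A,B) = (S_0(A,B)^2 − S_0(A,B))/2 + S_0(A^2,B^2)/12, where A^2,B^2 denote componentwise squaring. -/
open Finset

lemma qsum_id (n : ℕ) : ∑ t ∈ range n, (t:ℚ) = n*(n-1)/2 := by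
  induction n with
  | zero => simp
  | succ n ih => rw [Finset.sum_range_succ, ih]; push_cast; ring

lemma qsum_sq (n : ℕ) : ∑ t ∈ range n, (t:ℚ)^2 = n*(n-1)*(2*n-1)/6 := by
  induction n with
  | zero => simp
  | succ n ih => rw [Finset.sum_range_succ, ih]; push_cast; ring

lemma compoundSeq_glue (k : ℕ) (A B : ℕ → ℕ) {i : ℕ} (hik : i ≤ k) :
    compoundSeq (k+1) A B i = A k * compoundSeq k A B i := by
  unfold compoundSeq
  rw [Finset.prod_Ico_succ_top hik]
  ring

lemma compoundSeq_last (k : ℕ) (A B : ℕ → ℕ) :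
    compoundSeq (k+1) A B (k+1) = ∏ j ∈ range (k+1), B j := by
  unfold compoundSeq
  rw [Finset.Ico_self, Finset.prod_empty, mul_one]

lemma compoundSeq_self (k : ℕ) (A B : ℕ → ℕ) :
    compoundSeq k A B k = ∏ j ∈ range k, B j := by
  unfold compoundSeq
  rw [Finset.Ico_self, Finset.prod_empty, mul_one]

lemma compoundSeq_sq (k : ℕ) (A B : ℕ → ℕ) (i : ℕ) :
    compoundSeq k (fun t => (A t)^2) (fun t => (B t)^2) i = (compoundSeq k A B i)^2 := by
  unfold compoundSeq
  rw [Finset.prod_pow, Finset.prod_pow, mul_pow]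

def CRep (k : ℕ) (A B : ℕ → ℕ) (n : ℕ) : Prop :=
  ∃ c : Fin (k + 1) → ℕ, n = ∑ i : Fin (k + 1), c i * compoundSeq k A B (i : ℕ)

lemma crep_add_mul (k : ℕ) (A B : ℕ → ℕ) {m : ℕ} (hm : CRep k A B m) (s : ℕ) :
    CRep k A B (m + s * (∏ j ∈ range (k+1), B j)) := by
  obtain ⟨c, hc⟩ := hm
  refine ⟨fun i => c i + (if i = Fin.last k then s * B k else 0), ?_⟩
  have h2 : ∑ i : Fin (k+1), (c i + (if i = Fin.last k then s * B k else 0)) * compoundSeq k A B i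
      = (∑ i : Fin (k+1), c i * compoundSeq k A B i)
        + s * B k * compoundSeq k A B ((Fin.last k : Fin (k+1)) : ℕ) := by
    simp [add_mul, Finset.sum_add_distrib, ite_mul]
  rw [h2, ← hc, Fin.val_last, compoundSeq_self, Finset.prod_range_succ]
  ring

lemma crep_succ_iff (k : ℕ) (A B : ℕ → ℕ) (n : ℕ) :
    CRep (k+1) A B n ↔ ∃ m t, CRep k A B m ∧ n = A k * m + t * (∏ j ∈ range (k+1), B j) := by
  constructor
  · rintro ⟨c, hc⟩
    refine ⟨∑ i : Fin (k+1), c i.castSucc * compoundSeq k A B (i : ℕ), c (Fin.last (k+1)),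
      ⟨fun i => c i.castSucc, rfl⟩, ?_⟩
    rw [hc, Fin.sum_univ_castSucc, Finset.mul_sum]
    congr 1
    · refine Finset.sum_congr rfl fun i _ => ?_
      rw [Fin.coe_castSucc, compoundSeq_glue k A B (Nat.lt_succ_iff.mp i.isLt)]
      ring
    · rw [Fin.val_last, compoundSeq_last]
  · rintro ⟨m, t, ⟨c, hc⟩, rfl⟩
    refine ⟨Fin.snoc c t, ?_⟩
    rw [Fin.sum_univ_castSucc]
    simp only [Fin.snoc_castSucc, Fin.snoc_last, Fin.coe_castSucc, Fin.val_last, compoundSeq_last]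
    rw [hc, Finset.mul_sum]
    congr 1
    refine Finset.sum_congr rfl fun i _ => ?_
    rw [compoundSeq_glue k A B (Nat.lt_succ_iff.mp i.isLt)]
    ring

lemma sylvester_main (k : ℕ) (A B : ℕ → ℕ) :
    (∀ i, i < k → 0 < A i) → (∀ i, i < k → 0 < B i) →
    (∀ i j, j ≤ i → i < k → Nat.Coprime (A i) (B j)) →
    ∀ F : Finset ℕ, (∀ n, n ∈ F ↔ ¬ CRep k A B n) →
    ((F.card : ℚ) = ((∑ j ∈ range k, ((A j : ℚ) - 1) * (compoundSeq k A B (j+1) : ℚ))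
        - (∏ j ∈ range k, (A j : ℚ)) + 1) / 2) ∧
    (∑ n ∈ F, (n : ℚ) =
      (∑ j ∈ range k, ((A j:ℚ) - 1) * (compoundSeq k A B (j+1):ℚ))^2 / 8
      + (∑ j ∈ range k, ((A j:ℚ)^2 - 1) * (compoundSeq k A B (j+1):ℚ)^2) / 24
      - (∏ j ∈ range k, (A j:ℚ)) * (∑ j ∈ range k, ((A j:ℚ) - 1) * (compoundSeq k A B (j+1):ℚ)) / 4
      + ((∏ j ∈ range k, (A j:ℚ))^2 - 1) / 12) := by
  induction k with
  | zero =>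
    intro _ _ _ F hF
    have hFe : F = ∅ := by
      ext n
      simp only [Finset.notMem_empty, iff_false, hF n, not_not]
      exact ⟨fun _ => n, by simp [compoundSeq]⟩
    subst hFe
    norm_num
  | succ k ih =>

    intro hA hB hsuit F hF
    classical
    set a := A k with ha_def
    set h := ∏ j ∈ range (k+1), B j with hh_def
    have ha : 0 < a := hA k (Nat.lt_succ_self k)
    have hhpos : 0 < h := Finset.prod_pos fun j hj => hB j (mem_range.mp hj)
    have hcop : Nat.Coprime a h :=
      Nat.Coprime.prod_right fun j hj =>
        hsuit k j (Nat.lt_succ_iff.mp (mem_range.mp hj)) (Nat.lt_succ_self k)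
    have hrinj : ∀ t t' : ℕ, t < a → t' < a → t*h % a = t'*h % a → t = t' := by
      intro t t' ht ht' heq
      have h1 : t ≡ t' [MOD a] := Nat.ModEq.cancel_right_of_coprime hcop heq
      simpa [Nat.ModEq, Nat.mod_eq_of_lt ht, Nat.mod_eq_of_lt ht'] using h1
    have hperm : (range a).image (fun t => t*h % a) = range a := by
      apply Finset.eq_of_subset_of_card_le
      · intro x hx
        simp only [Finset.mem_image, Finset.mem_range] at hx ⊢
        obtain ⟨t, _, rfl⟩ := hx
        exact Nat.mod_lt _ ha
      · rw [Finset.card_image_of_injOn, card_range]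
        intro t ht t' ht' heq
        exact hrinj t t' (mem_range.mp ht) (mem_range.mp ht') heq
    have hsurj : ∀ n : ℕ, ∃ t, t < a ∧ t*h % a = n % a := by
      intro n
      have : n % a ∈ (range a).image (fun t => t*h % a) := by
        rw [hperm]; exact mem_range.mpr (Nat.mod_lt _ ha)
      obtain ⟨t, ht, heq⟩ := Finset.mem_image.mp this
      exact ⟨t, mem_range.mp ht, heq⟩
    have hmod : ∀ m t : ℕ, (a*m + t*h) % a = t*h % a := by
      intro m t
      rw [add_comm, Nat.add_mul_mod_self_left]
    have hrep' : ∀ n, CRep (k+1) A B n ↔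
        ∃ m t, CRep k A B m ∧ t < a ∧ n = a*m + t*h := by
      intro n
      rw [crep_succ_iff]
      constructor
      · rintro ⟨m, t, hm, rfl⟩
        refine ⟨m + (t/a)*h, t % a, crep_add_mul k A B hm (t/a), Nat.mod_lt _ ha, ?_⟩
        have h3 : a*(m + t/a*h) + t%a*h = a*m + (a*(t/a) + t%a)*h := by ring
        rw [h3, Nat.div_add_mod]
      · rintro ⟨m, t, hm, _, rfl⟩
        exact ⟨m, t, hm, rfl⟩
    have huniq : ∀ m t m' t' : ℕ, t < a → t' < a → a*m + t*h = a*m' + t'*h →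
        m = m' ∧ t = t' := by
      intro m t m' t' ht ht' heq
      have ht2 : t = t' := hrinj t t' ht ht' (by rw [← hmod m t, ← hmod m' t', heq])
      subst ht2
      have h4 : a*m = a*m' := by omega
      exact ⟨Nat.eq_of_mul_eq_mul_left ha h4, rfl⟩
    have hgapchar : ∀ n, ¬CRep (k+1) A B n ↔
        ((∃ m t, ¬CRep k A B m ∧ t < a ∧ n = a*m + t*h) ∨
         (∃ t, t < a ∧ n % a = t*h % a ∧ n < t*h)) := by
      intro n
      constructor
      · intro hn
        obtain ⟨t, ht, hteq⟩ := hsurj n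
        rcases le_or_gt (t*h) n with hle | hlt
        · left
          have hdvd : a ∣ n - t*h := (Nat.modEq_iff_dvd' hle).mp hteq
          obtain ⟨m, hm⟩ := hdvd
          have hn_eq : n = a*m + t*h := by omega
          refine ⟨m, t, fun hRm => hn ((hrep' n).mpr ⟨m, t, hRm, ht, hn_eq⟩), ht, hn_eq⟩
        · exact Or.inr ⟨t, ht, hteq.symm, hlt⟩
      · rintro (⟨m, t, hm, ht, rfl⟩ | ⟨t, ht, hmodeq, hlt⟩) hR
        · obtain ⟨m', t', hm', ht', heq⟩ := (hrep' _).mp hR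
          obtain ⟨hmm, -⟩ := huniq m t m' t' ht ht' heq
          exact hm (hmm ▸ hm')
        · obtain ⟨m', t', hm', ht', heq⟩ := (hrep' n).mp hR
          have ht2 : t' = t := hrinj t' t ht' ht (by rw [← hmod m' t', ← heq, hmodeq])
          subst ht2
          omega

    -- construct the gap set of the smaller system
    set N := F.sup id with hN_def
    set Fk : Finset ℕ := (range (N+1)).filter (fun m => ¬ CRep k A B m) with hFk_def
    have hFkmem : ∀ m, m ∈ Fk ↔ ¬ CRep k A B m := by
      intro m
      rw [hFk_def, Finset.mem_filter, Finset.mem_range]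
      constructor
      · exact fun hm => hm.2
      · intro hm
        refine ⟨?_, hm⟩
        have hnotrep : ¬ CRep (k+1) A B (a*m) :=
          (hgapchar (a*m)).mpr (Or.inl ⟨m, 0, hm, ha, by ring⟩)
        have hmemF : a*m ∈ F := (hF _).mpr hnotrep
        have h5 : a*m ≤ N := Finset.le_sup (f := id) hmemF
        have h6 : m ≤ a*m := Nat.le_mul_of_pos_left m ha
        omega
    obtain ⟨hc0, hs0⟩ := ih (fun i hi => hA i (by omega)) (fun i hi => hB i (by omega))
      (fun i j hj hi => hsuit i j hj (by omega)) Fk hFkmem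
    -- the two parts of F
    set part1 : Finset ℕ := (Fk ×ˢ range a).image (fun p => a * p.1 + p.2 * h) with hp1_def
    set part2 : Finset ℕ := (range a).biUnion
      (fun t => (range (t*h/a)).image (fun s => t*h % a + s*a)) with hp2_def
    have hrlt : ∀ t : ℕ, t*h % a < a := fun t => Nat.mod_lt _ ha
    have hdm : ∀ t : ℕ, a * (t*h/a) + t*h % a = t*h := fun t => Nat.div_add_mod (t*h) a
    have hmem1 : ∀ n, n ∈ part1 ↔ ∃ m t, ¬CRep k A B m ∧ t < a ∧ n = a*m + t*h := by
      intro n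
      rw [hp1_def]
      simp only [Finset.mem_image, Finset.mem_product, Finset.mem_range, Prod.exists]
      constructor
      · rintro ⟨m, t, ⟨hm, ht⟩, rfl⟩
        exact ⟨m, t, (hFkmem m).mp hm, ht, rfl⟩
      · rintro ⟨m, t, hm, ht, rfl⟩
        exact ⟨m, t, ⟨(hFkmem m).mpr hm, ht⟩, rfl⟩
    have hmem2 : ∀ n, n ∈ part2 ↔ ∃ t, t < a ∧ n % a = t*h % a ∧ n < t*h := by
      intro n
      rw [hp2_def]
      simp only [Finset.mem_biUnion, Finset.mem_image, Finset.mem_range]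
      constructor
      · rintro ⟨t, ht, s, hs, rfl⟩
        refine ⟨t, ht, ?_, ?_⟩
        · rw [Nat.add_mul_mod_self_right, Nat.mod_eq_of_lt (hrlt t)]
        · have h8 := hdm t
          have h9 : s*a < (t*h/a)*a := (Nat.mul_lt_mul_right ha).mpr hs
          have h10 : a*(t*h/a) = (t*h/a)*a := Nat.mul_comm _ _
          omega
      · rintro ⟨t, ht, hmodeq, hlt⟩
        have h7 := Nat.div_add_mod n a
        have h8 := hdm t
        have h9 : a*(n/a) = (n/a)*a := Nat.mul_comm _ _
        have h10 : a*(t*h/a) = (t*h/a)*a := Nat.mul_comm _ _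
        refine ⟨t, ht, n / a, ?_, by omega⟩
        have h11 : n/a * a < t*h/a * a := by omega
        exact Nat.lt_of_mul_lt_mul_right h11
    have hdecomp : F = part1 ∪ part2 := by
      ext n
      rw [hF n, hgapchar n, Finset.mem_union, hmem1, hmem2]
    have hdisj : Disjoint part1 part2 := by
      rw [Finset.disjoint_left]
      intro n h1 h2
      obtain ⟨m, t, hm, ht, rfl⟩ := (hmem1 n).mp h1
      obtain ⟨t', ht', hmodeq, hlt⟩ := (hmem2 _).mp h2
      have ht2 : t = t' := hrinj t t' ht ht' (by rw [← hmod m t, hmodeq])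
      subst ht2
      omega

    -- cardinalities and sums of the two parts
    have hinj1 : Set.InjOn (fun p : ℕ × ℕ => a * p.1 + p.2 * h) ↑(Fk ×ˢ range a) := by
      intro p hp p' hp' heq
      simp only [Finset.coe_product, Set.mem_prod, Finset.mem_coe, Finset.mem_range] at hp hp'
      obtain ⟨h1, h2⟩ := huniq p.1 p.2 p'.1 p'.2 hp.2 hp'.2 heq
      exact Prod.ext h1 h2
    have hcard1 : part1.card = Fk.card * a := by
      rw [hp1_def, Finset.card_image_of_injOn hinj1, Finset.card_product, Finset.card_range]
    have hdisj2 : ∀ t ∈ range a, ∀ t' ∈ range a, t ≠ t' →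
        Disjoint ((range (t*h/a)).image (fun s => t*h % a + s*a))
                 ((range (t'*h/a)).image (fun s => t'*h % a + s*a)) := by
      intro t ht t' ht' hne
      rw [Finset.disjoint_left]
      rintro x hx hx'
      simp only [Finset.mem_image, Finset.mem_range] at hx hx'
      obtain ⟨s, _, rfl⟩ := hx
      obtain ⟨s', _, heq⟩ := hx'
      apply hne
      refine hrinj t t' (mem_range.mp ht) (mem_range.mp ht') ?_
      have e1 : (t*h % a + s*a) % a = t*h % a := by
        rw [Nat.add_mul_mod_self_right, Nat.mod_eq_of_lt (hrlt t)]
      have e2 : (t'*h % a + s'*a) % a = t'*h % a := by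
        rw [Nat.add_mul_mod_self_right, Nat.mod_eq_of_lt (hrlt t')]
      rw [← e1, ← e2, heq]
    have hinj2 : ∀ t : ℕ, Set.InjOn (fun s => t*h % a + s*a) ↑(range (t*h/a)) := by
      intro t s _ s' _ heq
      simp only at heq
      have h12 : s*a = s'*a := by omega
      exact Nat.eq_of_mul_eq_mul_right ha h12
    have hcard2 : part2.card = ∑ t ∈ range a, (t*h/a) := by
      rw [hp2_def, Finset.card_biUnion hdisj2]
      refine Finset.sum_congr rfl fun t _ => ?_
      rw [Finset.card_image_of_injOn (hinj2 t), Finset.card_range]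
    have hcardF : (F.card : ℚ) = (Fk.card : ℚ) * a + ∑ t ∈ range a, ((t*h/a : ℕ) : ℚ) := by
      rw [hdecomp, Finset.card_union_of_disjoint hdisj, hcard1, hcard2]
      push_cast
      ring
    have hsum1 : ∑ n ∈ part1, (n:ℚ) = (a:ℚ)^2 * (∑ n ∈ Fk, (n:ℚ))
        + (a:ℚ)*((a:ℚ)-1)/2 * (h:ℚ) * (Fk.card : ℚ) := by
      rw [hp1_def, Finset.sum_image (fun p hp p' hp' heq =>
        hinj1 (Finset.mem_coe.mpr hp) (Finset.mem_coe.mpr hp') heq)]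
      rw [Finset.sum_product]
      have inner : ∀ m ∈ Fk, ∑ t ∈ range a, ((a * m + t * h : ℕ):ℚ)
          = (a:ℚ)^2 * (m:ℚ) + (a:ℚ)*((a:ℚ)-1)/2 * (h:ℚ) := by
        intro m _
        push_cast
        rw [Finset.sum_add_distrib, Finset.sum_const, Finset.card_range, ← Finset.sum_mul,
          qsum_id]
        ring
      rw [Finset.sum_congr rfl inner, Finset.sum_add_distrib, Finset.sum_const,
        ← Finset.mul_sum]
      rw [nsmul_eq_mul]
      ring
    have hsum2 : ∑ n ∈ part2, (n:ℚ) = ∑ t ∈ range a,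
        (((t*h/a : ℕ):ℚ) * ((t*h%a : ℕ):ℚ)
          + (a:ℚ) * ((t*h/a : ℕ):ℚ) * (((t*h/a : ℕ):ℚ) - 1) / 2) := by
      rw [hp2_def, Finset.sum_biUnion hdisj2]
      refine Finset.sum_congr rfl fun t _ => ?_
      rw [Finset.sum_image (fun s hs s' hs' heq =>
        hinj2 t (Finset.mem_coe.mpr hs) (Finset.mem_coe.mpr hs') heq)]
      push_cast
      rw [Finset.sum_add_distrib, Finset.sum_const, Finset.card_range, ← Finset.sum_mul,
        qsum_id]
      ring

    -- rational identities
    have haQ : (a:ℚ) ≠ 0 := Nat.cast_ne_zero.mpr ha.ne'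
    have hqr : ∀ t : ℕ, (a:ℚ) * ((t*h/a : ℕ):ℚ) + ((t*h%a : ℕ):ℚ) = (t:ℚ) * (h:ℚ) := by
      intro t
      exact_mod_cast congrArg (fun x : ℕ => (x:ℚ)) (hdm t)
    have hsumr : ∑ t ∈ range a, ((t*h % a : ℕ):ℚ) = (a:ℚ)*((a:ℚ)-1)/2 := by
      have h13 : ∑ x ∈ (range a).image (fun t => t*h % a), (x:ℚ)
          = ∑ t ∈ range a, ((t*h % a : ℕ):ℚ) :=
        Finset.sum_image fun t ht t' ht' heq =>
          hrinj t t' (mem_range.mp ht) (mem_range.mp ht') heq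
      rw [← h13, hperm, qsum_id]
    have hsumr2 : ∑ t ∈ range a, ((t*h % a : ℕ):ℚ)^2 = (a:ℚ)*((a:ℚ)-1)*(2*(a:ℚ)-1)/6 := by
      have h13 : ∑ x ∈ (range a).image (fun t => t*h % a), ((x:ℚ))^2
          = ∑ t ∈ range a, ((t*h % a : ℕ):ℚ)^2 :=
        Finset.sum_image fun t ht t' ht' heq =>
          hrinj t t' (mem_range.mp ht) (mem_range.mp ht') heq
      rw [← h13, hperm, qsum_sq]
    have hsumq : ∑ t ∈ range a, ((t*h/a : ℕ):ℚ) = ((h:ℚ)-1)*((a:ℚ)-1)/2 := by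
      apply mul_left_cancel₀ haQ
      rw [Finset.mul_sum]
      have h14 : ∀ t ∈ range a, (a:ℚ) * ((t*h/a : ℕ):ℚ)
          = (t:ℚ)*(h:ℚ) - ((t*h%a : ℕ):ℚ) := fun t _ => by linarith [hqr t]
      rw [Finset.sum_congr rfl h14, Finset.sum_sub_distrib, ← Finset.sum_mul, qsum_id, hsumr]
      ring
    have hsum2' : ∑ n ∈ part2, (n:ℚ)
        = ((h:ℚ)^2-1)*((a:ℚ)-1)*(2*(a:ℚ)-1)/12 - ((h:ℚ)-1)*(a:ℚ)*((a:ℚ)-1)/4 := by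
      rw [hsum2]
      apply mul_left_cancel₀ (show (2*(a:ℚ)) ≠ 0 by simpa using haQ)
      rw [Finset.mul_sum]
      have h15 : ∀ t ∈ range a, 2*(a:ℚ) * (((t*h/a : ℕ):ℚ) * ((t*h%a : ℕ):ℚ)
            + (a:ℚ) * ((t*h/a : ℕ):ℚ) * (((t*h/a : ℕ):ℚ) - 1) / 2)
          = (t:ℚ)^2*(h:ℚ)^2 - ((t*h%a:ℕ):ℚ)^2 - ((a:ℚ)*(h:ℚ))*(t:ℚ) + (a:ℚ)*((t*h%a:ℕ):ℚ) := by
        intro t _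
        linear_combination ((t:ℚ)*(h:ℚ) + (a:ℚ)*((t*h/a:ℕ):ℚ) + ((t*h%a:ℕ):ℚ) - (a:ℚ)) * hqr t
      rw [Finset.sum_congr rfl h15]
      rw [Finset.sum_add_distrib, Finset.sum_sub_distrib, Finset.sum_sub_distrib,
        ← Finset.sum_mul, ← Finset.mul_sum, ← Finset.mul_sum, qsum_sq, qsum_id, hsumr, hsumr2]
      ring
    -- recursions for the closed forms
    have hP : (∏ j ∈ range (k+1), (A j:ℚ)) = (a:ℚ) * ∏ j ∈ range k, (A j:ℚ) := by
      rw [Finset.prod_range_succ, ← ha_def]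
      ring
    have hE : ∑ j ∈ range (k+1), ((A j:ℚ) - 1) * (compoundSeq (k+1) A B (j+1):ℚ)
        = (a:ℚ) * (∑ j ∈ range k, ((A j:ℚ) - 1) * (compoundSeq k A B (j+1):ℚ))
          + ((a:ℚ)-1)*(h:ℚ) := by
      rw [Finset.sum_range_succ, Finset.mul_sum]
      congr 1
      · refine Finset.sum_congr rfl fun j hj => ?_
        have hjk := mem_range.mp hj
        rw [compoundSeq_glue k A B (by omega : j+1 ≤ k), ← ha_def]
        push_cast
        ring
      · rw [compoundSeq_last, ← ha_def, ← hh_def]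
    have hQ : ∑ j ∈ range (k+1), ((A j:ℚ)^2 - 1) * (compoundSeq (k+1) A B (j+1):ℚ)^2
        = (a:ℚ)^2 * (∑ j ∈ range k, ((A j:ℚ)^2 - 1) * (compoundSeq k A B (j+1):ℚ)^2)
          + ((a:ℚ)^2-1)*(h:ℚ)^2 := by
      rw [Finset.sum_range_succ, Finset.mul_sum]
      congr 1
      · refine Finset.sum_congr rfl fun j hj => ?_
        have hjk := mem_range.mp hj
        rw [compoundSeq_glue k A B (by omega : j+1 ≤ k), ← ha_def]
        push_cast
        ring
      · rw [compoundSeq_last, ← ha_def, ← hh_def]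
    have hsumF : ∑ n ∈ F, (n:ℚ) = ∑ n ∈ part1, (n:ℚ) + ∑ n ∈ part2, (n:ℚ) := by
      rw [hdecomp, Finset.sum_union hdisj]
    constructor
    · rw [hcardF, hsumq, hc0, hE, hP]
      ring
    · rw [hsumF, hsum1, hsum2', hs0, hc0, hE, hP, hQ]
      ring



/-- `S₁(A,B) = (S₀(A,B)² − S₀(A,B))/2 + S₀(A²,B²)/12`. -/
theorem sylvester_sum_one (k : ℕ) (A B : ℕ → ℕ)
    (hA : ∀ i, i < k → 0 < A i) (hB : ∀ i, i < k → 0 < B i)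
    (hsuit : ∀ i j, j ≤ i → i < k → Nat.Coprime (A i) (B j))
    (NR NR2 : Finset ℕ)
    (hNR : ∀ n : ℕ, n ∈ NR ↔
      ¬ ∃ c : Fin (k + 1) → ℕ, n = ∑ i : Fin (k + 1), c i * compoundSeq k A B (i : ℕ))
    (hNR2 : ∀ n : ℕ, n ∈ NR2 ↔
      ¬ ∃ c : Fin (k + 1) → ℕ,
        n = ∑ i : Fin (k + 1), c i * compoundSeq k (fun t => (A t) ^ 2) (fun t => (B t) ^ 2) (i : ℕ)) :
    (∑ n ∈ NR, (n : ℚ)) =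
      ((NR.card : ℚ) ^ 2 - (NR.card : ℚ)) / 2 + (NR2.card : ℚ) / 12 := by
  obtain ⟨hc, hs⟩ := sylvester_main k A B hA hB hsuit NR (fun n => hNR n)
  obtain ⟨hc2, -⟩ := sylvester_main k (fun t => (A t)^2) (fun t => (B t)^2)
    (fun i hi => pow_pos (hA i hi) 2) (fun i hi => pow_pos (hB i hi) 2)
    (fun i j hj hi => Nat.Coprime.pow 2 2 (hsuit i j hj hi)) NR2 (fun n => hNR2 n)
  have hEQ : ∑ j ∈ range k, (((fun t => (A t)^2) j : ℚ) - 1)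
        * (compoundSeq k (fun t => (A t)^2) (fun t => (B t)^2) (j+1) : ℚ)
      = ∑ j ∈ range k, ((A j:ℚ)^2 - 1) * (compoundSeq k A B (j+1):ℚ)^2 := by
    refine Finset.sum_congr rfl fun j _ => ?_
    rw [compoundSeq_sq k A B (j+1)]
    push_cast
    ring
  have hPP : ∏ j ∈ range k, (((fun t => (A t)^2) j : ℕ) : ℚ)
      = (∏ j ∈ range k, (A j:ℚ))^2 := by
    rw [← Finset.prod_pow]
    refine Finset.prod_congr rfl fun j _ => ?_
    push_cast
    ring
  rw [hEQ, hPP] at hc2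
  rw [hs, hc, hc2]
  ring
end
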